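/- Let A = ({a,b,c}, Q, δ) be a weakly acyclic automaton with n = |Q| states and let R = { q ∈ Q : δ(q, a) = q and δ(q, b) = q }. Then A has a synchronizing word belonging to the language (a+b)*ca* (i.e., a word of the form u c a^i with u ∈ {a,b}* and i ≥ 0) if and only if there exists an integer i with 0 ≤ i ≤ n such that δ(R, c a^i) is a singleton. -/

import Mathlib

/-- A three-letter alphabet `{a, b, c}`. -/
inductive ABC : Type
  | a | b | c
  deriving DecidableEq

instance instFintypeABC : Fintype ABC :=
  ⟨{ABC.a, ABC.b, ABC.c}, fun x => by cases x <;> simp⟩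

/-- The transition function extended to words: `δ*(q, u)`. -/
def deltaStar {Q A : Type*} (δ : Q → A → Q) (q : Q) (u : List A) : Q :=
  u.foldl δ q

/-- A complete deterministic semi-automaton is weakly acyclic if all simple
cycles are self-loops. -/
def WeaklyAcyclic {Q A : Type*} (δ : Q → A → Q) : Prop :=
  ∀ (q : Q) (u : List A), u ≠ [] → deltaStar δ q u = q → ∀ x ∈ u, δ q x = q

/-!
Reading a nonempty word `w` repeatedly traces an orbit of `p ↦ δ(p, w)`. In a weakly acyclic
automaton every cycle of this map is a fixed point whose state is fixed by each letter of `w`, so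
after `n = |Q|` iterations the orbit has stopped. With `w = ab` this sends every state into `R`,
on which every word over `{a, b}` acts trivially; with `w = a` it shows that `a^i` acts as
`a^(min i n)`.
-/

namespace Function

variable {α : Type*} [Fintype α] {f : α → α}

theorem isFixedPt_iterate_card (hf : periodicPts f ⊆ fixedPoints f) (x : α) :
    IsFixedPt f (f^[Fintype.card α] x) := by
  obtain ⟨i, j, hij, hfij⟩ := Fintype.exists_ne_map_eq_of_card_lt
    (fun k : Fin (Fintype.card α + 1) => f^[k] x) (by simp)
  wlog hlt : i < j generalizing i j
  · exact this j i hij.symm hfij.symm (hij.symm.lt_of_le (not_lt.mp hlt))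
  have hperiodic : IsPeriodicPt f (j - i) (f^[i] x) := by
    change f^[j - i] (f^[i] x) = f^[i] x
    rw [← iterate_add_apply, Nat.sub_add_cancel hlt.le]
    exact hfij.symm
  have hfixed : IsFixedPt f (f^[i] x) := hf (mk_mem_periodicPts (by omega) hperiodic)
  have hi : (i : ℕ) ≤ Fintype.card α := Nat.lt_succ_iff.mp i.isLt
  rwa [← Nat.sub_add_cancel hi, iterate_add_apply, hfixed.iterate]

theorem iterate_eq_iterate_card_of_le (hf : periodicPts f ⊆ fixedPoints f) (x : α) {k : ℕ}
    (hk : Fintype.card α ≤ k) : f^[k] x = f^[Fintype.card α] x := by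
  rw [← Nat.sub_add_cancel hk, iterate_add_apply, (isFixedPt_iterate_card hf x).iterate]

end Function

open Function

section deltaStar

variable {Q A : Type*} (δ : Q → A → Q)

@[simp]
theorem deltaStar_cons (q : Q) (x : A) (u : List A) :
    deltaStar δ q (x :: u) = deltaStar δ (δ q x) u := rfl

theorem deltaStar_append (q : Q) (u v : List A) :
    deltaStar δ q (u ++ v) = deltaStar δ (deltaStar δ q u) v :=
  List.foldl_append

theorem deltaStar_flatten_replicate (q : Q) (k : ℕ) (w : List A) :
    deltaStar δ q (List.replicate k w).flatten = (deltaStar δ · w)^[k] q := by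
  induction k generalizing q with
  | zero => rfl
  | succ k ih => rw [List.replicate_succ, List.flatten_cons, deltaStar_append, ih]; rfl

variable {δ}

theorem deltaStar_eq_self_of_forall_mem {q : Q} {u : List A} (h : ∀ x ∈ u, δ q x = q) :
    deltaStar δ q u = q := by
  induction u with
  | nil => rfl
  | cons x u ih =>
    rw [deltaStar_cons, h x List.mem_cons_self]
    exact ih fun y hy => h y (List.mem_cons_of_mem x hy)

end deltaStar

namespace WeaklyAcyclic

variable {Q A : Type*} {δ : Q → A → Q}

theorem forall_mem_fixed_of_mem_periodicPts (hwa : WeaklyAcyclic δ) {w : List A} (hw : w ≠ [])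
    {q : Q} (hq : q ∈ periodicPts (deltaStar δ · w)) : ∀ x ∈ w, δ q x = q := by
  obtain ⟨k, hk, hperiodic⟩ := hq
  have hwk : (List.replicate k w).flatten ≠ [] := by simp [hw, hk.ne']
  refine fun x hx => hwa q _ hwk ?_ x (List.mem_flatten.mpr ⟨w, ?_, hx⟩)
  · rwa [deltaStar_flatten_replicate]
  · exact List.mem_replicate.mpr ⟨hk.ne', rfl⟩

theorem periodicPts_subset_fixedPoints (hwa : WeaklyAcyclic δ) {w : List A} (hw : w ≠ []) :
    periodicPts (deltaStar δ · w) ⊆ fixedPoints (deltaStar δ · w) :=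
  fun _ hq => deltaStar_eq_self_of_forall_mem (hwa.forall_mem_fixed_of_mem_periodicPts hw hq)

variable [Fintype Q]

theorem forall_mem_fixed_deltaStar_flatten_replicate_card (hwa : WeaklyAcyclic δ) {w : List A}
    (hw : w ≠ []) (q : Q) :
    let p := deltaStar δ q (List.replicate (Fintype.card Q) w).flatten
    ∀ x ∈ w, δ p x = p := by
  rw [deltaStar_flatten_replicate]
  exact hwa.forall_mem_fixed_of_mem_periodicPts hw
    (mk_mem_periodicPts one_pos
      ((isFixedPt_iterate_card (hwa.periodicPts_subset_fixedPoints hw) q).isPeriodicPt 1))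

theorem deltaStar_replicate_min_card (hwa : WeaklyAcyclic δ) (q : Q) (x : A) (k : ℕ) :
    deltaStar δ q (List.replicate (min k (Fintype.card Q)) x) =
      deltaStar δ q (List.replicate k x) := by
  rcases le_total k (Fintype.card Q) with hk | hk
  · rw [min_eq_left hk]
  · rw [min_eq_right hk, ← List.flatten_replicate_singleton (n := k),
      ← List.flatten_replicate_singleton (n := Fintype.card Q), deltaStar_flatten_replicate,
      deltaStar_flatten_replicate]
    exact (iterate_eq_iterate_card_of_le
      (hwa.periodicPts_subset_fixedPoints (List.cons_ne_nil x [])) q hk).symm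

end WeaklyAcyclic

/-- A weakly acyclic automaton over `{a,b,c}` with `n` states has a
synchronizing word in the language `(a+b)*ca*` iff there is some `0 ≤ i ≤ n`
such that `δ(R, c a^i)` is a singleton, where
`R = {q | δ(q,a) = q ∧ δ(q,b) = q}`. -/
theorem sync_constraint_abStar_c_aStar {Q : Type*} [Fintype Q] [Nonempty Q]
    (δ : Q → ABC → Q) (hwa : WeaklyAcyclic δ) :
    (∃ (u : List ABC) (i : ℕ), (∀ x ∈ u, x = ABC.a ∨ x = ABC.b) ∧
        ∃ q : Q, ∀ p : Q,
          deltaStar δ p (u ++ [ABC.c] ++ List.replicate i ABC.a) = q) ↔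
      ∃ i ≤ Fintype.card Q, ∃ q : Q,
        (fun r => deltaStar δ r (ABC.c :: List.replicate i ABC.a)) ''
          {p : Q | δ p ABC.a = p ∧ δ p ABC.b = p} = {q} := by
  set R := {p : Q | δ p ABC.a = p ∧ δ p ABC.b = p}
  set toR := (List.replicate (Fintype.card Q) [ABC.a, ABC.b]).flatten
  have mem_R (p : Q) : deltaStar δ p toR ∈ R :=
    have h := hwa.forall_mem_fixed_deltaStar_flatten_replicate_card (List.cons_ne_nil _ _) p
    ⟨h ABC.a (by simp), h ABC.b (by simp)⟩
  constructor
  · rintro ⟨u, i, hu, q, hq⟩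
    have hu_R {r : Q} (hr : r ∈ R) : deltaStar δ r u = r :=
      deltaStar_eq_self_of_forall_mem fun x hx => by
        rcases hu x hx with rfl | rfl
        exacts [hr.1, hr.2]
    refine ⟨min i (Fintype.card Q), min_le_right _ _, q,
      Set.eq_singleton_iff_nonempty_unique_mem.mpr ⟨?_, ?_⟩⟩
    · exact ⟨_, Set.mem_image_of_mem _ (mem_R (Classical.arbitrary Q))⟩
    rintro _ ⟨r, hr, rfl⟩
    simpa only [deltaStar_cons, hwa.deltaStar_replicate_min_card, List.append_assoc,
      List.singleton_append, deltaStar_append, hu_R hr] using hq r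
  · rintro ⟨i, -, q, himg⟩
    refine ⟨toR, i, by simp [toR], q, fun p => ?_⟩
    rw [List.append_assoc, List.singleton_append, deltaStar_append, ← Set.mem_singleton_iff,
      ← himg]
    exact Set.mem_image_of_mem _ (mem_R p)
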